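/- arXiv:1809.03744 — 5 statements merged into one kernel-verified Lean document; each statement's English description precedes it below -/
import Mathlib

section
/- For all x, y ∈ ℚ^V one has χ(x ∨ y) + χ(x ∧ y) ≤ χ(x) + χ(y). -/
/-!
Since `x ⊔ y + x ⊓ y = x + y`, the linear part of `χ` cancels, and for `p = x ⊔ y - x`,
`q = x ⊔ y - y` the defect `χ x + χ y - χ (x ⊔ y) - χ (x ⊓ y)` equals `(B p q + B q p) / 2`.
The vectors `p` and `q` are nonnegative with disjoint supports, so expanding `B p q` in the
standard basis leaves only off-diagonal entries, which are nonnegative.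
-/

theorem LinearMap.apply_self_add_apply_self_of_add_eq {R M N : Type*} [CommRing R]
    [AddCommGroup M] [Module R M] [AddCommGroup N] [Module R N] (B : M →ₗ[R] M →ₗ[R] N)
    {a b x y : M} (h : a + b = x + y) :
    B a a + B b b = B x x + B y y + B (a - x) (a - y) + B (a - y) (a - x) := by
  obtain rfl : b = x + y - a := eq_sub_of_add_eq' h
  simp only [map_sub, map_add, LinearMap.sub_apply, LinearMap.add_apply]
  abel

theorem LinearMap.BilinForm.apply_nonneg_of_inf_eq_zero {R ι : Type*} [CommRing R]
    [LinearOrder R] [IsOrderedRing R] [Fintype ι] [DecidableEq ι]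
    (B : LinearMap.BilinForm R (ι → R))
    (hB : ∀ i j, i ≠ j → 0 ≤ B (Pi.single i 1) (Pi.single j 1)) {p q : ι → R}
    (hpq : p ⊓ q = 0) : 0 ≤ B p q := by
  have hp : 0 ≤ p := hpq ▸ inf_le_left
  have hq : 0 ≤ q := hpq ▸ inf_le_right
  rw [← Matrix.toBilin'_toMatrix' B, Matrix.toBilin'_apply]
  refine Finset.sum_nonneg fun i _ => Finset.sum_nonneg fun j _ => ?_
  rw [BilinForm.toMatrix'_apply]
  obtain rfl | hij := eq_or_ne i j
  · have hmin : min (p i) (q i) = 0 := congrFun hpq i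
    rcases min_choice (p i) (q i) with h | h <;> rw [h] at hmin <;> simp [hmin]
  · exact mul_nonneg (mul_nonneg (hp i) (hB i j hij)) (hq j)

theorem chi_submodular_general
    {V : Type*} [Fintype V] [DecidableEq V]
    (B : LinearMap.BilinForm ℚ (V → ℚ))
    (hoff : ∀ v w : V, v ≠ w → 0 ≤ B (Pi.single v 1) (Pi.single w 1))
    (ZK : V → ℚ)
    (χ : (V → ℚ) → ℚ)
    (hχ : ∀ x : V → ℚ, χ x = -(B x (x - ZK)) / 2) :
    ∀ x y : V → ℚ, χ (x ⊔ y) + χ (x ⊓ y) ≤ χ x + χ y := by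
  intro x y
  have hsum : x ⊔ y + x ⊓ y = x + y := by rw [add_comm, inf_add_sup]
  have hdisj : (x ⊔ y - x) ⊓ (x ⊔ y - y) = 0 := by rw [← sub_sup, sub_self]
  have hquad := B.apply_self_add_apply_self_of_add_eq hsum
  have hpq := LinearMap.BilinForm.apply_nonneg_of_inf_eq_zero B hoff hdisj
  have hqp := LinearMap.BilinForm.apply_nonneg_of_inf_eq_zero B hoff 
    (inf_comm (x ⊔ y - x) _ ▸ hdisj)
  have hlin : B (x ⊔ y) ZK + B (x ⊓ y) ZK = B x ZK + B y ZK := by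
    rw [← LinearMap.add_apply, ← map_add, hsum, map_add, LinearMap.add_apply]
  simp only [hχ, map_sub]
  linarith

/-- submodularity: for all `x, y ∈ ℚ^V`,
`χ(x ∨ y) + χ(x ∧ y) ≤ χ(x) + χ(y)`. -/
theorem chi_submodular
    {V : Type*} [Fintype V] [Nonempty V] [DecidableEq V]
    (B : LinearMap.BilinForm ℚ (V → ℚ))
    (hsymm : ∀ x y : V → ℚ, B x y = B y x)
    (hoff : ∀ v w : V, v ≠ w → 0 ≤ B (Pi.single v 1) (Pi.single w 1))
    (ZK : V → ℚ)
    (hZK : ∀ v : V, B ZK (Pi.single v 1) = B (Pi.single v 1) (Pi.single v 1) + 2)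
    (χ : (V → ℚ) → ℚ)
    (hχ : ∀ x : V → ℚ, χ x = -(B x (x - ZK)) / 2) :
    ∀ x y : V → ℚ, χ (x ⊔ y) + χ (x ⊓ y) ≤ χ x + χ y :=
  chi_submodular_general B hoff ZK χ hχ
end

section
/- Let μ = min_{l ∈ ℤ^V} χ(l) (this minimum exists). If x, y ∈ ℤ^V satisfy χ(x) = χ(y) = μ, then χ(x ∨ y) = μ and χ(x ∧ y) = μ; that is, the set of minimizers of χ on ℤ^V is closed under coordinatewise maximum and minimum. -/
/-!
On `ℚ^V`, `χ` is submodular: with `s = x ⊔ y` and `t = x ⊓ y` one has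
`χ s + χ t = χ x + χ y - B (s - x) (s - y)`, and `s - x`, `s - y` are nonnegative with disjoint
supports, so `B (s - x) (s - y) ≥ 0` because the off-diagonal entries of `B` are nonnegative.
Hence for two minimizers `χ s + χ t ≤ 2μ` while both terms are `≥ μ`.
The minimum exists because `χ ≥ B(Z, Z)/8` (complete the square, `B` being negative definite)
and `χ` takes values in `(2D)⁻¹ ℤ` on `ℤ^V`, where `D` is a common denominator of the
entries `B(e_v, e_w)` and `B(e_v, Z)`.
-/

/-- Cast an integer-valued lattice point into the rational vector space `V → ℚ`. -/
def toQ {V : Type*} (l : V → ℤ) : V → ℚ := fun v => (l v : ℚ)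

open AddSubgroup

theorem toQ_sup {V : Type*} (x y : V → ℤ) : toQ (x ⊔ y) = toQ x ⊔ toQ y :=
  funext fun _ => Int.cast_max

theorem toQ_inf {V : Type*} (x y : V → ℤ) : toQ (x ⊓ y) = toQ x ⊓ toQ y :=
  funext fun _ => Int.cast_min

theorem Rat.mem_zmultiples_inv_of_den_dvd {q : ℚ} {D : ℕ} (hD : D ≠ 0) (h : q.den ∣ D) :
    q ∈ zmultiples ((D : ℚ)⁻¹) := by
  obtain ⟨k, rfl⟩ := h
  have hk : (k : ℚ) ≠ 0 := by exact_mod_cast right_ne_zero_of_mul hD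
  refine mem_zmultiples_iff.2 ⟨q.num * k, ?_⟩
  rw [zsmul_eq_mul]
  push_cast
  rw [← q.mul_den_eq_num]
  field_simp

theorem Rat.exists_forall_mem_zmultiples_inv {ι : Type*} [Fintype ι] (q : ι → ℚ) :
    ∃ D : ℕ, 0 < D ∧ ∀ i, q i ∈ zmultiples ((D : ℚ)⁻¹) := by
  have hD : 0 < ∏ i, (q i).den := Finset.prod_pos fun i _ => (q i).den_pos
  exact ⟨_, hD, fun i =>
    mem_zmultiples_inv_of_den_dvd hD.ne' (Finset.dvd_prod_of_mem _ (Finset.mem_univ i))⟩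

theorem Rat.exists_forall_le_of_mem_zmultiples {α : Type*} [Nonempty α] {f : α → ℚ} {ε : ℚ}
    (hε : 0 < ε) (hf : ∀ a, f a ∈ zmultiples ε) (hbdd : BddBelow (Set.range f)) :
    ∃ a, ∀ b, f a ≤ f b := by
  choose k hk using fun a => mem_zmultiples_iff.1 (hf a)
  obtain ⟨c, hc⟩ := hbdd
  have hk_bdd (a : α) : ⌊c / ε⌋ ≤ k a := by
    refine (Int.floor_mono ?_).trans_eq (Int.floor_intCast (k a))
    rw [div_le_iff₀ hε, ← zsmul_eq_mul, hk]
    exact hc ⟨a, rfl⟩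
  obtain ⟨_, ⟨a₀, rfl⟩, hmin⟩ := Int.exists_least_of_bdd (P := fun z => ∃ a, k a = z)
    ⟨_, fun _ ⟨a, ha⟩ => ha ▸ hk_bdd a⟩ ⟨_, Classical.arbitrary α, rfl⟩
  refine ⟨a₀, fun b => ?_⟩
  rw [← hk, ← hk, zsmul_eq_mul, zsmul_eq_mul]
  exact mul_le_mul_of_nonneg_right (by exact_mod_cast hmin _ ⟨b, rfl⟩) hε.le

theorem LinearMap.map_toQ_mem {V M : Type*} [Fintype V] [DecidableEq V] [AddCommGroup M]
    [Module ℚ M] (f : (V → ℚ) →ₗ[ℚ] M) {G : AddSubgroup M}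
    (hf : ∀ v, f (Pi.single v 1) ∈ G) (l : V → ℤ) : f (toQ l) ∈ G := by
  rw [← Finset.univ_sum_single (toQ l), map_sum]
  refine G.sum_mem fun v _ => ?_
  have : Pi.single v (toQ l v) = l v • (Pi.single v 1 : V → ℚ) := by
    rw [← Pi.single_smul', zsmul_eq_mul, mul_one]; rfl
  rw [this, map_zsmul]
  exact G.zsmul_mem (hf v) _

namespace LinearMap.BilinForm

def chi {K M : Type*} [Field K] [AddCommGroup M] [Module K M] (B : LinearMap.BilinForm K M)
    (Z x : M) : K :=
  -(B x (x - Z)) / 2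

theorem chi_eq {K M : Type*} [Field K] [AddCommGroup M] [Module K M]
    (B : LinearMap.BilinForm K M) (Z x : M) : B.chi Z x = (B x Z - B x x) / 2 := by
  rw [chi, map_sub]; ring

theorem apply_eq_sum_sum_single {K V : Type*} [CommSemiring K] [Fintype V] [DecidableEq V]
    (B : LinearMap.BilinForm K (V → K)) (x y : V → K) :
    B x y = ∑ i, ∑ j, x i * y j * B (Pi.single i 1) (Pi.single j 1) := by
  conv_lhs => rw [← Matrix.toLinearMap₂'_toMatrix' (R := K) B]
  simp only [Matrix.toLinearMap₂'_apply, LinearMap.toMatrix₂'_apply, smul_eq_mul, mul_assoc]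

section LinearOrderedField

variable {K : Type*} [Field K] [LinearOrder K] [IsStrictOrderedRing K]

section Module

variable {M : Type*} [AddCommGroup M] [Module K M] (B : LinearMap.BilinForm K M)

theorem chi_add_chi_of_add_eq (hB : B.IsSymm) (Z : M) {x y s t : M} (h : s + t = x + y) :
    B.chi Z s + B.chi Z t = B.chi Z x + B.chi Z y - B (s - x) (s - y) := by
  obtain rfl : t = x + y - s := eq_sub_of_add_eq' h
  simp only [chi_eq, map_sub, map_add, LinearMap.sub_apply, LinearMap.add_apply]
  rw [hB.eq y x, hB.eq s x, hB.eq s y]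
  ring

theorem div_eight_le_chi (hB : B.IsSymm) (hnonpos : ∀ w, B w w ≤ 0) (Z x : M) :
    B Z Z / 8 ≤ B.chi Z x := by
  have hsq := hnonpos (x - (2 : K)⁻¹ • Z)
  simp only [map_sub, map_smul, LinearMap.sub_apply, LinearMap.smul_apply, smul_eq_mul,
    hB.eq Z x] at hsq
  rw [chi_eq]
  linarith

end Module

variable {V : Type*} [Fintype V] [DecidableEq V] (B : LinearMap.BilinForm K (V → K))

theorem apply_nonneg_of_mul_eq_zero
    (hoff : ∀ v w, v ≠ w → 0 ≤ B (Pi.single v 1) (Pi.single w 1))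
    {a b : V → K} (ha : 0 ≤ a) (hb : 0 ≤ b) (hab : ∀ v, a v * b v = 0) : 0 ≤ B a b := by
  rw [apply_eq_sum_sum_single]
  refine Finset.sum_nonneg fun v _ => Finset.sum_nonneg fun w _ => ?_
  rcases eq_or_ne v w with rfl | hvw
  · rw [hab, zero_mul]
  · exact mul_nonneg (mul_nonneg (ha v) (hb w)) (hoff v w hvw)

theorem chi_sup_add_chi_inf_le (hB : B.IsSymm)
    (hoff : ∀ v w, v ≠ w → 0 ≤ B (Pi.single v 1) (Pi.single w 1)) (Z x y : V → K) :
    B.chi Z (x ⊔ y) + B.chi Z (x ⊓ y) ≤ B.chi Z x + B.chi Z y := by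
  rw [B.chi_add_chi_of_add_eq hB Z ((add_comm _ _).trans (inf_add_sup x y))]
  have hdisj (v : V) : (x ⊔ y - x) v * (x ⊔ y - y) v = 0 := by
    rcases le_total (x v) (y v) with h | h <;> simp [h]
  have hcross := B.apply_nonneg_of_mul_eq_zero hoff (sub_nonneg.2 le_sup_left)
    (sub_nonneg.2 le_sup_right) hdisj
  linarith

end LinearOrderedField

section Rat

variable {V : Type*} [Fintype V] [DecidableEq V] (B : LinearMap.BilinForm ℚ (V → ℚ))

theorem exists_pos_forall_chi_toQ_mem_zmultiples (Z : V → ℚ) :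
    ∃ ε : ℚ, 0 < ε ∧ ∀ l, B.chi Z (toQ l) ∈ zmultiples ε := by
  -- all entries `B(e_v, e_w)` and `B(e_v, Z)` as one finite family
  obtain ⟨D, hD, hq⟩ := Rat.exists_forall_mem_zmultiples_inv
    fun p : V × Option V => B (Pi.single p.1 1) (p.2.elim Z (Pi.single · 1))
  refine ⟨(2 * D : ℚ)⁻¹, by positivity, fun l => ?_⟩
  have hZ : B (toQ l) Z ∈ zmultiples ((D : ℚ)⁻¹) :=
    (B.flip Z).map_toQ_mem (fun v => hq (v, none)) l
  have hl : B (toQ l) (toQ l) ∈ zmultiples ((D : ℚ)⁻¹) :=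
    (B.flip (toQ l)).map_toQ_mem (fun v => (B (Pi.single v 1)).map_toQ_mem
      (fun w => hq (v, some w)) l) l
  obtain ⟨k, hk⟩ := mem_zmultiples_iff.1 (sub_mem hZ hl)
  refine mem_zmultiples_iff.2 ⟨k, ?_⟩
  rw [chi_eq, ← hk, zsmul_eq_mul, zsmul_eq_mul, mul_inv]
  ring

theorem exists_forall_chi_toQ_le (hB : B.IsSymm) (hnonpos : ∀ w, B w w ≤ 0) (Z : V → ℚ) :
    ∃ l₀ : V → ℤ, ∀ l, B.chi Z (toQ l₀) ≤ B.chi Z (toQ l) := by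
  obtain ⟨ε, hε, hmem⟩ := B.exists_pos_forall_chi_toQ_mem_zmultiples Z
  exact Rat.exists_forall_le_of_mem_zmultiples hε hmem
    ⟨B Z Z / 8, Set.forall_mem_range.2 fun _ => B.div_eight_le_chi hB hnonpos Z _⟩

end Rat

end LinearMap.BilinForm

theorem chi_minimizers_lattice_closed_general
    {V : Type*} [Fintype V] [DecidableEq V]
    (B : LinearMap.BilinForm ℚ (V → ℚ))
    (hsymm : ∀ x y : V → ℚ, B x y = B y x)
    (hoff : ∀ v w : V, v ≠ w → 0 ≤ B (Pi.single v 1) (Pi.single w 1))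
    (hneg : ∀ x : V → ℚ, x ≠ 0 → B x x < 0)
    (ZK : V → ℚ)
    (χ : (V → ℚ) → ℚ)
    (hχ : ∀ x : V → ℚ, χ x = -(B x (x - ZK)) / 2) :
    ∃ μ : ℚ, (∃ l : V → ℤ, χ (toQ l) = μ) ∧ (∀ l : V → ℤ, μ ≤ χ (toQ l)) ∧
      (∀ x y : V → ℤ, χ (toQ x) = μ → χ (toQ y) = μ →
        χ (toQ (x ⊔ y)) = μ ∧ χ (toQ (x ⊓ y)) = μ) := by
  obtain rfl : χ = B.chi ZK := funext hχ
  have hB : B.IsSymm := ⟨hsymm⟩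
  have hnonpos (w : V → ℚ) : B w w ≤ 0 := by
    rcases eq_or_ne w 0 with rfl | hw
    · simp
    · exact (hneg w hw).le
  obtain ⟨l₀, hl₀⟩ := B.exists_forall_chi_toQ_le hB hnonpos ZK
  refine ⟨B.chi ZK (toQ l₀), ⟨l₀, rfl⟩, hl₀, fun x y hx hy => ?_⟩
  have hsub := B.chi_sup_add_chi_inf_le hB hoff ZK (toQ x) (toQ y)
  rw [← toQ_sup, ← toQ_inf, hx, hy] at hsub
  have hsup := hl₀ (x ⊔ y)
  have hinf := hl₀ (x ⊓ y)
  constructor <;> linarith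

/-- Let `μ = min_{l ∈ ℤ^V} χ(l)` (this minimum exists).  If
`x, y ∈ ℤ^V` satisfy `χ(x) = χ(y) = μ`, then `χ(x ∨ y) = μ` and `χ(x ∧ y) = μ`:
the set of minimizers of `χ` on `ℤ^V` is closed under coordinatewise max and min. -/
theorem chi_minimizers_lattice_closed
    {V : Type*} [Fintype V] [Nonempty V] [DecidableEq V]
    (B : LinearMap.BilinForm ℚ (V → ℚ))
    (hsymm : ∀ x y : V → ℚ, B x y = B y x)
    (hoff : ∀ v w : V, v ≠ w → 0 ≤ B (Pi.single v 1) (Pi.single w 1))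
    (hneg : ∀ x : V → ℚ, x ≠ 0 → B x x < 0)
    (ZK : V → ℚ)
    (hZK : ∀ v : V, B ZK (Pi.single v 1) = B (Pi.single v 1) (Pi.single v 1) + 2)
    (χ : (V → ℚ) → ℚ)
    (hχ : ∀ x : V → ℚ, χ x = -(B x (x - ZK)) / 2) :
    ∃ μ : ℚ, (∃ l : V → ℤ, χ (toQ l) = μ) ∧ (∀ l : V → ℤ, μ ≤ χ (toQ l)) ∧
      (∀ x y : V → ℤ, χ (toQ x) = μ → χ (toQ y) = μ →
        χ (toQ (x ⊔ y)) = μ ∧ χ (toQ (x ⊓ y)) = μ) :=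
  chi_minimizers_lattice_closed_general B hsymm hoff hneg ZK χ hχ
end

section
/- If μ := min_{l ∈ ℤ^V} χ(l) < 0, then the set M = {Z ∈ ℤ^V : Z > 0 and χ(Z) = μ} is nonempty and has a least element: there exists Z_min ∈ M such that Z_min ≤ Z for every Z ∈ M. -/
/-!
Write `χ(x + y) = χ(x) + χ(y) - B(x, y)`. Since `B(x, y) ≥ 0` whenever `x, y ≥ 0` have disjoint
supports, `χ` is submodular on `ℤ^V`: `χ(Z ⊓ Z') + χ(Z ⊔ Z') ≤ χ(Z) + χ(Z')`. Hence the effective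
minimizers of `χ` are closed under `⊓`, and, as they all lie above `0` and order intervals in `ℤ^V`
are finite, they have a least element; it is nonzero because `χ(0) = 0 > μ`.

Effective minimizers exist: if `l` is a minimizer, then `χ(l ⊔ 0) ≤ χ(l) - χ(l ⊓ 0) ≤ χ(l)`,
because `χ ≥ 0` on antieffective cycles. For the latter, negative definiteness gives, for
`z ≤ 0`, `z ≠ 0`, a vertex `v` with `z_v < 0` and `B(z, e_v) > 0`, hence `B(z, e_v) ≥ 1` by
integrality; as `χ(e_v) = 1`, this gives `χ(z) ≥ χ(z + e_v)`, and one inducts on `-∑ z_v`.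
-/

open Finset

lemma InfClosed.exists_isLeast {α : Type*} [SemilatticeInf α] [LocallyFiniteOrder α] {s : Set α}
    (hs : InfClosed s) (hne : s.Nonempty) (hbdd : BddBelow s) : ∃ a, IsLeast s a := by
  classical
  obtain ⟨b, hb⟩ := hbdd
  obtain ⟨c, hc⟩ := hne
  set t := {x ∈ Icc b c | x ∈ s}
  have hct : c ∈ t := mem_filter.2 ⟨mem_Icc.2 ⟨hb hc, le_rfl⟩, hc⟩
  refine ⟨t.inf' ⟨c, hct⟩ id, hs.finsetInf'_mem _ fun x hx => (mem_filter.1 hx).2, fun x hx => ?_⟩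
  have hxc : x ⊓ c ∈ t := mem_filter.2 ⟨mem_Icc.2 ⟨le_inf (hb hx) (hb hc), inf_le_right⟩, hs hx hc⟩
  exact (inf'_le id hxc).trans inf_le_left

section toQ

variable {V : Type*}

@[simp]
lemma toQ_zero : toQ (0 : V → ℤ) = 0 := by
  funext v; simp [toQ]

@[simp]
lemma toQ_eq_zero {z : V → ℤ} : toQ z = 0 ↔ z = 0 := by
  simp [funext_iff, toQ]

lemma toQ_add_single [DecidableEq V] (z : V → ℤ) (v : V) :
    toQ (z + Pi.single v 1) = toQ z + Pi.single v 1 := by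
  funext w; simp [toQ, Pi.single_apply]

lemma toQ_inf_s6 (z z' : V → ℤ) : toQ (z ⊓ z') = toQ z ⊓ toQ z' := by
  funext v; simp [toQ]

lemma toQ_sup_s6 (z z' : V → ℤ) : toQ (z ⊔ z') = toQ z ⊔ toQ z' := by
  funext v; simp [toQ]

end toQ

def riemannRochChi {M : Type*} [AddCommGroup M] [Module ℚ M]
    (B : LinearMap.BilinForm ℚ M) (ZK x : M) : ℚ :=
  -(B x (x - ZK)) / 2

section Module

variable {M : Type*} [AddCommGroup M] [Module ℚ M] (B : LinearMap.BilinForm ℚ M) (ZK : M)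

@[simp]
lemma riemannRochChi_zero : riemannRochChi B ZK 0 = 0 := by
  simp [riemannRochChi]

lemma riemannRochChi_add (hB : B.IsSymm) (x y : M) :
    riemannRochChi B ZK (x + y) = riemannRochChi B ZK x + riemannRochChi B ZK y - B x y := by
  simp only [riemannRochChi, map_add, map_sub, LinearMap.add_apply, hB.eq y x]
  ring

end Module

lemma riemannRochChi_single {V : Type*} [DecidableEq V] {B : LinearMap.BilinForm ℚ (V → ℚ)}
    (hB : B.IsSymm) {ZK : V → ℚ}
    (hZK : ∀ v : V, B ZK (Pi.single v 1) = B (Pi.single v 1) (Pi.single v 1) + 2) (v : V) :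
    riemannRochChi B ZK (Pi.single v 1) = 1 := by
  rw [riemannRochChi, map_sub, hB.eq (Pi.single v 1) ZK, hZK]
  ring

section Pi

variable {V : Type*} [Fintype V] [DecidableEq V] (B : LinearMap.BilinForm ℚ (V → ℚ))

lemma bilinForm_apply_eq_sum_left (x y : V → ℚ) :
    B x y = ∑ v, x v * B (Pi.single v 1) y := by
  conv_lhs => rw [pi_eq_sum_univ' x]
  simp [map_sum]

lemma bilinForm_apply_eq_sum_right (x y : V → ℚ) :
    B x y = ∑ w, y w * B x (Pi.single w 1) := by
  conv_lhs => rw [pi_eq_sum_univ' y]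
  simp [map_sum]

lemma bilinForm_nonneg_of_inf_eq_zero
    (hoff : ∀ v w : V, v ≠ w → 0 ≤ B (Pi.single v 1) (Pi.single w 1))
    {x y : V → ℚ} (hx : 0 ≤ x) (hy : 0 ≤ y) (hxy : x ⊓ y = 0) : 0 ≤ B x y := by
  rw [bilinForm_apply_eq_sum_left]
  refine sum_nonneg fun v _ => ?_
  rw [bilinForm_apply_eq_sum_right, mul_sum]
  refine sum_nonneg fun w _ => ?_
  obtain rfl | hvw := eq_or_ne v w
  · have : x v ⊓ y v = 0 := congrFun hxy v
    rcases min_choice (x v) (y v) with h | h <;> simp_all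
  · exact mul_nonneg (hx v) (mul_nonneg (hy w) (hoff v w hvw))

lemma riemannRochChi_inf_add_sup_le (hB : B.IsSymm)
    (hoff : ∀ v w : V, v ≠ w → 0 ≤ B (Pi.single v 1) (Pi.single w 1)) (ZK x y : V → ℚ) :
    riemannRochChi B ZK (x ⊓ y) + riemannRochChi B ZK (x ⊔ y) ≤
      riemannRochChi B ZK x + riemannRochChi B ZK y := by
  set a := x ⊓ y
  set q := y - a
  have hsup : x ⊔ y = x + q := by
    rw [← add_sub_assoc, ← inf_add_sup x y, add_sub_cancel_left]
  have hdisj : (x - a) ⊓ q = 0 := by rw [← inf_sub, sub_self]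
  have hpq := bilinForm_nonneg_of_inf_eq_zero B hoff (sub_nonneg.2 inf_le_left)
    (sub_nonneg.2 inf_le_right) hdisj
  have hx := riemannRochChi_add B ZK hB x q
  have hy := riemannRochChi_add B ZK hB a q
  rw [add_sub_cancel] at hy
  rw [LinearMap.map_sub₂] at hpq
  rw [hsup, hx, hy]
  linarith

lemma riemannRochChi_toQ_inf_add_sup_le (hB : B.IsSymm)
    (hoff : ∀ v w : V, v ≠ w → 0 ≤ B (Pi.single v 1) (Pi.single w 1)) (ZK : V → ℚ)
    (z z' : V → ℤ) :
    riemannRochChi B ZK (toQ (z ⊓ z')) + riemannRochChi B ZK (toQ (z ⊔ z')) ≤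
      riemannRochChi B ZK (toQ z) + riemannRochChi B ZK (toQ z') := by
  rw [toQ_inf_s6, toQ_sup_s6]
  exact riemannRochChi_inf_add_sup_le B hB hoff ZK _ _

lemma exists_int_bilinForm_toQ_single
    (hint : ∀ v w : V, ∃ n : ℤ, B (Pi.single v 1) (Pi.single w 1) = (n : ℚ))
    (z : V → ℤ) (w : V) : ∃ n : ℤ, B (toQ z) (Pi.single w 1) = n := by
  choose n hn using hint
  exact ⟨∑ v, z v * n v w, by simp [bilinForm_apply_eq_sum_left, toQ, hn]⟩

lemma exists_one_le_bilinForm_toQ_single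
    (hint : ∀ v w : V, ∃ n : ℤ, B (Pi.single v 1) (Pi.single w 1) = (n : ℚ))
    (hneg : ∀ x : V → ℚ, x ≠ 0 → B x x < 0) {z : V → ℤ} (hz : z ≤ 0) (hz0 : z ≠ 0) :
    ∃ v, z v < 0 ∧ 1 ≤ B (toQ z) (Pi.single v 1) := by
  have hzz := hneg (toQ z) (mt toQ_eq_zero.1 hz0)
  rw [bilinForm_apply_eq_sum_right] at hzz
  obtain ⟨v, -, hv⟩ := exists_lt_of_sum_lt (hzz.trans_eq sum_const_zero.symm)
  obtain ⟨n, hn⟩ := exists_int_bilinForm_toQ_single B hint z v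
  have hzv : (z v : ℚ) ≤ 0 := by exact_mod_cast hz v
  rw [hn, toQ, mul_neg_iff] at hv
  obtain ⟨hzv', -⟩ | ⟨hzv', hn'⟩ := hv
  · exact absurd hzv' hzv.not_gt
  · refine ⟨v, by exact_mod_cast hzv', ?_⟩
    rw [hn]
    exact_mod_cast (show (0 : ℤ) < n by exact_mod_cast hn')

theorem riemannRochChi_toQ_nonneg_of_nonpos (hB : B.IsSymm)
    (hint : ∀ v w : V, ∃ n : ℤ, B (Pi.single v 1) (Pi.single w 1) = (n : ℚ))
    (hneg : ∀ x : V → ℚ, x ≠ 0 → B x x < 0) {ZK : V → ℚ}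
    (hZK : ∀ v : V, B ZK (Pi.single v 1) = B (Pi.single v 1) (Pi.single v 1) + 2)
    (z : V → ℤ) (hz : z ≤ 0) : 0 ≤ riemannRochChi B ZK (toQ z) := by
  obtain rfl | hz0 := eq_or_ne z 0
  · simp
  obtain ⟨v, hzv, hBv⟩ := exists_one_le_bilinForm_toQ_single B hint hneg hz hz0
  have hz' : z + Pi.single v 1 ≤ 0 := by
    intro w
    obtain rfl | hwv := eq_or_ne w v
    · simpa using hzv
    · simpa [hwv] using hz w
  have ih := riemannRochChi_toQ_nonneg_of_nonpos hB hint hneg hZK (z + Pi.single v 1) hz'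
  have hstep := riemannRochChi_add B ZK hB (toQ z) (Pi.single v 1)
  rw [← toQ_add_single, riemannRochChi_single hB hZK] at hstep
  linarith
termination_by (-∑ w, z w).toNat
decreasing_by
  have hsum : ∑ w, (z + Pi.single v 1 : V → ℤ) w = ∑ w, z w + 1 := by simp [sum_add_distrib]
  have hsum_neg : ∑ w, z w < 0 :=
    sum_lt_sum (fun w _ => hz w) ⟨v, mem_univ v, hzv⟩ |>.trans_eq sum_const_zero
  omega

end Pi

theorem chi_minimizers_least_element_general
    {V : Type*} [Fintype V] [DecidableEq V]
    (B : LinearMap.BilinForm ℚ (V → ℚ))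
    (hsymm : ∀ x y : V → ℚ, B x y = B y x)
    (hint : ∀ v w : V, ∃ n : ℤ, B (Pi.single v 1) (Pi.single w 1) = (n : ℚ))
    (hoff : ∀ v w : V, v ≠ w → 0 ≤ B (Pi.single v 1) (Pi.single w 1))
    (hneg : ∀ x : V → ℚ, x ≠ 0 → B x x < 0)
    (ZK : V → ℚ)
    (hZK : ∀ v : V, B ZK (Pi.single v 1) = B (Pi.single v 1) (Pi.single v 1) + 2)
    (χ : (V → ℚ) → ℚ)
    (hχ : ∀ x : V → ℚ, χ x = -(B x (x - ZK)) / 2)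
    (μ : ℚ)
    (hμ : IsLeast {c : ℚ | ∃ l : V → ℤ, χ (toQ l) = c} μ)
    (hμneg : μ < 0) :
    ∃ Zmin : V → ℤ, (0 ≤ Zmin ∧ Zmin ≠ 0 ∧ χ (toQ Zmin) = μ) ∧
      ∀ Z : V → ℤ, (0 ≤ Z ∧ Z ≠ 0 ∧ χ (toQ Z) = μ) → Zmin ≤ Z := by
  obtain rfl : χ = riemannRochChi B ZK := funext hχ
  have hB : B.IsSymm := ⟨hsymm⟩
  obtain ⟨⟨l, hl⟩, hμle⟩ := hμ
  have hlb (Z : V → ℤ) : μ ≤ riemannRochChi B ZK (toQ Z) := hμle ⟨Z, rfl⟩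
  have hsub := riemannRochChi_toQ_inf_add_sup_le B hB hoff ZK
  set P := {Z : V → ℤ | 0 ≤ Z ∧ riemannRochChi B ZK (toQ Z) = μ}
  have hP : InfClosed P := fun Z ⟨hZ0, hZ⟩ Z' ⟨hZ0', hZ'⟩ =>
    ⟨le_inf hZ0 hZ0', le_antisymm (by linarith [hsub Z Z', hlb (Z ⊔ Z')]) (hlb _)⟩
  have hlP : l ⊔ 0 ∈ P := by
    have hneg_part := riemannRochChi_toQ_nonneg_of_nonpos B hB hint hneg hZK (l ⊓ 0) inf_le_right
    have hsub0 := hsub l 0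
    rw [toQ_zero, riemannRochChi_zero] at hsub0
    exact ⟨le_sup_right, le_antisymm (by linarith) (hlb _)⟩
  obtain ⟨Zmin, ⟨hZmin0, hZminμ⟩, hZmin_le⟩ := hP.exists_isLeast ⟨_, hlP⟩ ⟨0, fun Z hZ => hZ.1⟩
  refine ⟨Zmin, ⟨hZmin0, ?_, hZminμ⟩, fun Z hZ => hZmin_le ⟨hZ.1, hZ.2.2⟩⟩
  rintro rfl
  simp only [toQ_zero, riemannRochChi_zero] at hZminμ
  exact hμneg.ne' hZminμ

/-- If `μ := min_{l ∈ ℤ^V} χ(l) < 0`, then the set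
`M = {Z ∈ ℤ^V : Z > 0, χ(Z) = μ}` is nonempty and has a least element. -/
theorem chi_minimizers_least_element
    {V : Type*} [Fintype V] [Nonempty V] [DecidableEq V]
    (B : LinearMap.BilinForm ℚ (V → ℚ))
    (hsymm : ∀ x y : V → ℚ, B x y = B y x)
    (hint : ∀ v w : V, ∃ n : ℤ, B (Pi.single v 1) (Pi.single w 1) = (n : ℚ))
    (hoff : ∀ v w : V, v ≠ w → 0 ≤ B (Pi.single v 1) (Pi.single w 1))
    (hneg : ∀ x : V → ℚ, x ≠ 0 → B x x < 0)
    (ZK : V → ℚ)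
    (hZK : ∀ v : V, B ZK (Pi.single v 1) = B (Pi.single v 1) (Pi.single v 1) + 2)
    (χ : (V → ℚ) → ℚ)
    (hχ : ∀ x : V → ℚ, χ x = -(B x (x - ZK)) / 2)
    (μ : ℚ)
    (hμ : IsLeast {c : ℚ | ∃ l : V → ℤ, χ (toQ l) = c} μ)
    (hμneg : μ < 0) :
    ∃ Zmin : V → ℤ, (0 ≤ Zmin ∧ Zmin ≠ 0 ∧ χ (toQ Zmin) = μ) ∧
      ∀ Z : V → ℤ, (0 ≤ Z ∧ Z ≠ 0 ∧ χ (toQ Z) = μ) → Zmin ≤ Z :=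
  chi_minimizers_least_element_general B hsymm hint hoff hneg ZK hZK χ hχ μ hμ hμneg
end

section
/- Assume the simple graph on V whose edges are the pairs {u, v} with u ≠ v and B(e_u, e_v) > 0 is connected. Let l′ ∈ ℚ^V with l′ ≤ 0 coordinatewise, and suppose that l′_v = 0 for some v ∈ V and l′_u < 0 for some u ∈ V. Then there exists w ∈ V with l′_w = 0 and B(l′, e_w) < 0. -/
/-! The vertices with `l′ < 0` and those with `l′ = 0` are both nonempty, so by connectedness some
edge `{z, w}` joins them. Expanding `l′` in the standard basis, `B(l′, e_w) = ∑ₓ l′ₓ B(e_x, e_w)`: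
the term `x = w` vanishes, every other term is `≤ 0` since `l′ ≤ 0` and `B(e_x, e_w) ≥ 0`, and the
term `x = z` is strictly negative. -/

namespace LinearMap.BilinForm

variable {K V : Type*} [Fintype V] [DecidableEq V]

theorem apply_eq_sum_single_left [CommSemiring K] (B : LinearMap.BilinForm K (V → K))
    (x y : V → K) :
    B x y = ∑ i, x i * B (Pi.single i 1) y := by
  conv_lhs => rw [pi_eq_sum_univ' x]
  simp only [map_sum, map_smul, LinearMap.sum_apply, LinearMap.smul_apply, smul_eq_mul]

theorem apply_single_neg_of_nonpos [CommRing K] [PartialOrder K] [IsStrictOrderedRing K]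
    {B : LinearMap.BilinForm K (V → K)} {x : V → K} {z w : V}
    (hx : x ≤ 0) (hB : ∀ i, i ≠ w → 0 ≤ B (Pi.single i 1) (Pi.single w 1))
    (hw : x w = 0) (hz : x z < 0) (hzw : 0 < B (Pi.single z 1) (Pi.single w 1)) :
    B x (Pi.single w 1) < 0 := by
  rw [apply_eq_sum_single_left B]
  refine Finset.sum_neg' (fun i _ => ?_) ⟨z, Finset.mem_univ z, mul_neg_of_neg_of_pos hz hzw⟩
  by_cases hiw : i = w
  · simp [hiw, hw]
  · exact mul_nonpos_of_nonpos_of_nonneg (hx i) (hB i hiw)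

end LinearMap.BilinForm

theorem exists_zero_vertex_with_negative_pairing_general
    {V : Type*} [Fintype V] [DecidableEq V]
    (B : LinearMap.BilinForm ℚ (V → ℚ))
    (hsymm : ∀ x y : V → ℚ, B x y = B y x)
    (hoff : ∀ v w : V, v ≠ w → 0 ≤ B (Pi.single v 1) (Pi.single w 1))
    (hconn : (SimpleGraph.fromRel
      (fun u v : V => 0 < B (Pi.single u 1) (Pi.single v 1))).Connected)
    (l' : V → ℚ) (hl' : l' ≤ 0)
    (v : V) (hv : l' v = 0)
    (u : V) (hu : l' u < 0) :
    ∃ w : V, l' w = 0 ∧ B l' (Pi.single w 1) < 0 := by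
  obtain ⟨⟨⟨z, w⟩, hadj⟩, -, hz, hw_not_neg⟩ :=
    (hconn u v).some.exists_boundary_dart {x | l' x < 0} hu (by simp [hv])
  have hw : l' w = 0 := le_antisymm (hl' w) (not_lt.mp hw_not_neg)
  have hzw : 0 < B (Pi.single z 1) (Pi.single w 1) := by
    rcases (SimpleGraph.fromRel_adj _ _ _).mp hadj with ⟨-, h | h⟩
    · exact h
    · rwa [hsymm]
  exact ⟨w, hw, LinearMap.BilinForm.apply_single_neg_of_nonpos hl' (fun i hi => hoff i w hi)
    hw hz hzw⟩

/-- Assume the simple graph on `V` with edges `{u, v}`, `u ≠ v`,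
`B(e_u, e_v) > 0`, is connected.  If `l′ ≤ 0`, `l′_v = 0` for some `v` and
`l′_u < 0` for some `u`, then there is `w` with `l′_w = 0` and `B(l′, e_w) < 0`. -/
theorem exists_zero_vertex_with_negative_pairing
    {V : Type*} [Fintype V] [Nonempty V] [DecidableEq V]
    (B : LinearMap.BilinForm ℚ (V → ℚ))
    (hsymm : ∀ x y : V → ℚ, B x y = B y x)
    (hoff : ∀ v w : V, v ≠ w → 0 ≤ B (Pi.single v 1) (Pi.single w 1))
    (hconn : (SimpleGraph.fromRel
      (fun u v : V => 0 < B (Pi.single u 1) (Pi.single v 1))).Connected)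
    (l' : V → ℚ) (hl' : l' ≤ 0)
    (v : V) (hv : l' v = 0)
    (u : V) (hu : l' u < 0) :
    ∃ w : V, l' w = 0 ∧ B l' (Pi.single w 1) < 0 :=
  exists_zero_vertex_with_negative_pairing_general B hsymm hoff hconn l' hl' v hv u hu
end

section
/- For every l′ ∈ ℚ^V there exists Z₀ ∈ ℤ^V with Z₀ ≥ 0 such that for every Z ∈ ℤ^V with Z ≥ Z₀, the minimum of χ(−l′ + l) over {l ∈ ℤ^V : 0 ≤ l ≤ Z} equals the minimum of χ(−l′ + l) over {l ∈ ℤ^V : l ≥ 0} (all these minima exist). -/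
/-!
On the lattice, `l ↦ χ(-l' + l)` takes its values in a single coset of `d ℤ` for some rational
`d > 0` (a common denominator of the values of `B` on basis vectors and on `l'`, `Z_K`), and
completing the square with the negative definite `B` bounds it below by `B(Z_K, Z_K) / 8`.
A set of rationals that is bounded below and lies in a coset of `d ℤ` has a least element, so the
minimum over `l ≥ 0` is attained at some `l₀ ≥ 0`, and `Z₀ := l₀` works for every `Z ≥ Z₀`.
-/

open AddSubgroup Finset

theorem exists_pos_forall_mem_zmultiples (s : Finset ℚ) :
    ∃ d : ℚ, 0 < d ∧ ∀ q ∈ s, q ∈ zmultiples d := by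
  set N : ℕ := ∏ q ∈ s, q.den
  have hN : N ≠ 0 := by positivity
  refine ⟨(N : ℚ)⁻¹, by positivity, fun q hq => ?_⟩
  obtain ⟨m, hm⟩ : q.den ∣ N := dvd_prod_of_mem _ hq
  have hm0 : (m : ℚ) ≠ 0 := Nat.cast_ne_zero.2 (right_ne_zero_of_mul (hm ▸ hN))
  refine mem_zmultiples_iff.2 ⟨q.num * m, ?_⟩
  conv_rhs => rw [← Rat.num_div_den q]
  rw [zsmul_eq_mul, hm]
  push_cast
  field_simp

theorem exists_isLeast_image_of_sub_mem_zmultiples {α : Type*} {S : Set α} {g : α → ℚ}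
    {c d : ℚ} (hd : 0 < d) (hg : ∀ a ∈ S, g a - c ∈ zmultiples d) (hbdd : BddBelow (g '' S))
    (hS : S.Nonempty) : ∃ a ∈ S, IsLeast (g '' S) (g a) := by
  obtain ⟨m, hm⟩ := hbdd
  have hbdd_int : ∃ b : ℤ, ∀ k : ℤ, (∃ a ∈ S, k • d = g a - c) → b ≤ k := by
    refine ⟨⌊(m - c) / d⌋, fun k ⟨a, ha, hk⟩ => Int.floor_le_iff.2 ?_⟩
    have : m ≤ g a := hm ⟨a, ha, rfl⟩
    rw [zsmul_eq_mul] at hk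
    rw [div_lt_iff₀ hd]
    linarith
  obtain ⟨a₀, ha₀⟩ := hS
  obtain ⟨k, ⟨a, ha, hk⟩, hleast⟩ := Int.exists_least_of_bdd hbdd_int
    ⟨_, a₀, ha₀, (mem_zmultiples_iff.1 (hg a₀ ha₀)).choose_spec⟩
  refine ⟨a, ha, ⟨a, ha, rfl⟩, ?_⟩
  rintro _ ⟨b, hb, rfl⟩
  obtain ⟨j, hj⟩ := mem_zmultiples_iff.1 (hg b hb)
  have hkj : (k : ℚ) ≤ j := by exact_mod_cast hleast j ⟨b, hb, hj⟩
  rw [zsmul_eq_mul] at hk hj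
  nlinarith

section Lattice

variable {V : Type*} [Fintype V]

theorem map_toQ_mem_of_forall_single_mem [DecidableEq V] (φ : (V → ℚ) →ₗ[ℚ] ℚ)
    {H : AddSubgroup ℚ} (h : ∀ u, φ (Pi.single u 1) ∈ H) (l : V → ℤ) : φ (toQ l) ∈ H := by
  have hl : toQ l = ∑ u, l u • (Pi.single u 1 : V → ℚ) := by
    ext v
    simp [toQ, Pi.single_apply]
  rw [hl, map_sum]
  exact sum_mem fun u _ => by rw [map_zsmul]; exact zsmul_mem (h u) _

theorem exists_pos_bilinForm_add_toQ_sub_mem_zmultiples (B : LinearMap.BilinForm ℚ (V → ℚ))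
    (y z : V → ℚ) :
    ∃ d : ℚ, 0 < d ∧ ∀ l : V → ℤ, B (y + toQ l) (z + toQ l) - B y z ∈ zmultiples d := by
  classical
  obtain ⟨d, hd, hmem⟩ := exists_pos_forall_mem_zmultiples
    (univ.image (fun p : V × V => B (Pi.single p.1 1) (Pi.single p.2 1)) ∪
      univ.image (fun u => B y (Pi.single u 1)) ∪ univ.image (fun u => B (Pi.single u 1) z))
  refine ⟨d, hd, fun l => ?_⟩
  have hexpand : B (y + toQ l) (z + toQ l) - B y z =
      B (toQ l) (toQ l) + B y (toQ l) + B (toQ l) z := by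
    simp only [map_add, LinearMap.add_apply]
    ring
  rw [hexpand]
  refine add_mem (add_mem ?_ ?_) ?_
  · refine map_toQ_mem_of_forall_single_mem (B (toQ l)) (fun u => ?_) l
    exact map_toQ_mem_of_forall_single_mem (B.flip (Pi.single u 1)) (fun v => hmem _ (by simp)) l
  · exact map_toQ_mem_of_forall_single_mem (B y) (fun u => hmem _ (by simp)) l
  · exact map_toQ_mem_of_forall_single_mem (B.flip z) (fun u => hmem _ (by simp)) l

end Lattice

theorem LinearMap.BilinForm.apply_self_sub_le_of_nonpos {M : Type*} [AddCommGroup M]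
    [Module ℚ M] (B : LinearMap.BilinForm ℚ M) (hsymm : ∀ x y, B x y = B y x)
    (hB : ∀ x, B x x ≤ 0) (x z : M) : B x (x - z) ≤ -(B z z / 4) := by
  have hsquare : B x (x - z) = B (x - (2 : ℚ)⁻¹ • z) (x - (2 : ℚ)⁻¹ • z) - B z z / 4 := by
    simp only [map_sub, map_smul, LinearMap.sub_apply, LinearMap.smul_apply, smul_eq_mul]
    linear_combination (2 : ℚ)⁻¹ * hsymm z x
  linarith [hB (x - (2 : ℚ)⁻¹ • z)]

theorem chi_truncated_min_stabilizes_general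
    {V : Type*} [Fintype V]
    (B : LinearMap.BilinForm ℚ (V → ℚ))
    (hsymm : ∀ x y : V → ℚ, B x y = B y x)
    (hneg : ∀ x : V → ℚ, x ≠ 0 → B x x < 0)
    (ZK : V → ℚ)
    (χ : (V → ℚ) → ℚ)
    (hχ : ∀ x : V → ℚ, χ x = -(B x (x - ZK)) / 2) :
    ∀ l' : V → ℚ, ∃ Z₀ : V → ℤ, 0 ≤ Z₀ ∧
      ∀ Z : V → ℤ, Z₀ ≤ Z →
        ∃ μ : ℚ,
          IsLeast ((fun l : V → ℤ => χ (-l' + toQ l)) '' {l | 0 ≤ l ∧ l ≤ Z}) μ ∧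
          IsLeast ((fun l : V → ℤ => χ (-l' + toQ l)) '' {l | 0 ≤ l}) μ := by
  intro l'
  set g : (V → ℤ) → ℚ := fun l => χ (-l' + toQ l)
  have hnonpos : ∀ x, B x x ≤ 0 := fun x => by
    rcases eq_or_ne x 0 with rfl | hx
    · simp
    · exact (hneg x hx).le
  obtain ⟨d, hd, hdisc⟩ := exists_pos_bilinForm_add_toQ_sub_mem_zmultiples B (-l') (-l' - ZK)
  have hcoset : ∀ l ∈ {l : V → ℤ | 0 ≤ l}, g l - χ (-l') ∈ zmultiples (d / 2) := by
    intro l _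
    obtain ⟨k, hk⟩ := mem_zmultiples_iff.1 (hdisc l)
    refine mem_zmultiples_iff.2 ⟨-k, ?_⟩
    have hshift : -l' + toQ l - ZK = -l' - ZK + toQ l := by abel
    simp only [g, hχ, hshift, zsmul_eq_mul] at hk ⊢
    push_cast
    linear_combination (-1 / 2 : ℚ) * hk
  have hbdd : BddBelow (g '' {l | 0 ≤ l}) := by
    refine ⟨B ZK ZK / 8, ?_⟩
    rintro _ ⟨l, -, rfl⟩
    simp only [g, hχ]
    linarith [B.apply_self_sub_le_of_nonpos hsymm hnonpos (-l' + toQ l) ZK]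
  obtain ⟨l₀, hl₀, hmin⟩ := exists_isLeast_image_of_sub_mem_zmultiples (half_pos hd) hcoset hbdd
    ⟨0, le_refl (0 : V → ℤ)⟩
  exact ⟨l₀, hl₀, fun Z hZ => ⟨g l₀, ⟨⟨l₀, ⟨hl₀, hZ⟩, rfl⟩,
    lowerBounds_mono_set (Set.image_mono fun _ hl => hl.1) hmin.2⟩, hmin⟩⟩

/-- For every `l′ ∈ ℚ^V` there exists `Z₀ ∈ ℤ^V`, `Z₀ ≥ 0`, such
that for every `Z ≥ Z₀` the minimum of `χ(−l′ + l)` over `{0 ≤ l ≤ Z}` equals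
the minimum over `{l ≥ 0}` (all these minima exist). -/
theorem chi_truncated_min_stabilizes
    {V : Type*} [Fintype V] [Nonempty V] [DecidableEq V]
    (B : LinearMap.BilinForm ℚ (V → ℚ))
    (hsymm : ∀ x y : V → ℚ, B x y = B y x)
    (hneg : ∀ x : V → ℚ, x ≠ 0 → B x x < 0)
    (ZK : V → ℚ)
    (hZK : ∀ v : V, B ZK (Pi.single v 1) = B (Pi.single v 1) (Pi.single v 1) + 2)
    (χ : (V → ℚ) → ℚ)
    (hχ : ∀ x : V → ℚ, χ x = -(B x (x - ZK)) / 2) :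
    ∀ l' : V → ℚ, ∃ Z₀ : V → ℤ, 0 ≤ Z₀ ∧
      ∀ Z : V → ℤ, Z₀ ≤ Z →
        ∃ μ : ℚ,
          IsLeast ((fun l : V → ℤ => χ (-l' + toQ l)) '' {l | 0 ≤ l ∧ l ≤ Z}) μ ∧
          IsLeast ((fun l : V → ℤ => χ (-l' + toQ l)) '' {l | 0 ≤ l}) μ :=
  chi_truncated_min_stabilizes_general B hsymm hneg ZK χ hχ
end
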